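/- arXiv:2212.05143 — 5 statements merged into one kernel-verified Lean document; each statement's English description precedes it below -/
import Mathlib

section
/- Let u ∈ C_b²(ℝ). Then for every x ∈ ℝ, (−Δ)^{1/2}u(x) = (1/π) · lim_{ε→0⁺, R→∞} ∫_{ε≤|x−y|≤R} u′(y)/(x−y) dy, i.e. the half-Laplacian of u equals the Hilbert transform of u′ (all non-absolutely-convergent integrals taken as symmetric principal values at the singularity and at infinity). -/
/-!
Write `φ(t) = 2 u(x) - u(x + t) - u(x - t)`. Folding `y ↦ -y`, the truncated integral defining
`(-Δ)^{1/2} u (x)` becomes `∫_{t ≥ ε} φ(t) / t²`; since `φ = O(t²)` at `0` (`u'` is Lipschitz)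
and `φ = O(1)` at `∞` (`u` is bounded), `φ / t²` is integrable on `(0, ∞)`. Folding `y ↦ 2x - y`,
the truncated Hilbert integral becomes `∫_ε^R φ'(t) / t`, which integration by parts turns into
`∫_ε^R φ(t) / t² + φ(R) / R - φ(ε) / ε`, and the same two bounds kill the boundary terms.
Both limits are therefore `∫_0^∞ φ(t) / t²`, and `c_1 = 1 / π`.
-/

open Filter MeasureTheory Set

/-- The constant `c_α` in the definition of the fractional Laplacian. -/
noncomputable def cAlpha (α : ℝ) : ℝ :=
  α * 2 ^ (α - 1) * Real.Gamma (1 / 2 + α / 2) / (Real.sqrt Real.pi * Real.Gamma (1 - α / 2))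

/-- `u ∈ C_b²(ℝ)`: twice continuously differentiable with `u`, `u'`, `u''` bounded. -/
def Cb2 (u : ℝ → ℝ) : Prop :=
  ContDiff ℝ 2 u ∧ (∃ M, ∀ x, |u x| ≤ M) ∧ (∃ M, ∀ x, |deriv u x| ≤ M) ∧
    (∃ M, ∀ x, |deriv (deriv u) x| ≤ M)

/-- `I` is the principal value `PV ∫ (u(x) - u(x+y))/|y|^{1+α} dy`, taken as the symmetric
limit `ε → 0⁺` of the integrals over `{ε ≤ |y|}`; so `(−Δ)^{α/2} u (x) = c_α * I`. -/
def fracLapPV (α : ℝ) (u : ℝ → ℝ) (x I : ℝ) : Prop :=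
  Tendsto (fun ε : ℝ => ∫ y in {y : ℝ | ε ≤ |y|}, (u x - u (x + y)) / |y| ^ (1 + α))
    (nhdsWithin 0 (Set.Ioi 0)) (nhds I)

open scoped NNReal Topology

theorem cAlpha_one : cAlpha 1 = 1 / Real.pi := by
  norm_num [cAlpha, Real.Gamma_one, Real.Gamma_one_half_eq, Real.mul_self_sqrt Real.pi_pos.le]

theorem tendsto_setIntegral_of_eventually_mem {α ι E : Type*} [MeasurableSpace α]
    [NormedAddCommGroup E] [NormedSpace ℝ E] {μ : Measure α} {l : Filter ι}
    [l.IsCountablyGenerated] {s : Set α} {S : ι → Set α} {g : α → E}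
    (hg : IntegrableOn g s μ) (hS : ∀ i, MeasurableSet (S i)) (hSs : ∀ᶠ i in l, S i ⊆ s)
    (hmem : ∀ᵐ a ∂μ.restrict s, ∀ᶠ i in l, a ∈ S i) :
    Tendsto (fun i => ∫ a in S i, g a ∂μ) l (𝓝 (∫ a in s, g a ∂μ)) := by
  have hind : Tendsto (fun i => ∫ a in s, (S i).indicator g a ∂μ) l (𝓝 (∫ a in s, g a ∂μ)) :=
    tendsto_integral_filter_of_dominated_convergence (fun a => ‖g a‖)
      (.of_forall fun i => hg.aestronglyMeasurable.indicator (hS i))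
      (.of_forall fun i => .of_forall fun a => norm_indicator_le_norm_self g a) hg.norm
      (hmem.mono fun a ha => tendsto_const_nhds.congr' <|
        ha.mono fun i hi => (indicator_of_mem hi g).symm)
  refine hind.congr' (hSs.mono fun i hi => ?_)
  rw [setIntegral_indicator (hS i), inter_eq_right.mpr hi]

theorem setIntegral_abs_mem_eq_add_neg {E : Type*} [NormedAddCommGroup E] [NormedSpace ℝ E]
    {A : Set ℝ} (hA : MeasurableSet A) (hA0 : A ⊆ Ioi 0) {f : ℝ → E}
    (hf : IntegrableOn f A) (hf_neg : IntegrableOn (fun t => f (-t)) A) :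
    ∫ y in {y | |y| ∈ A}, f y = ∫ t in A, (f t + f (-t)) := by
  have hneg := Measure.measurePreserving_neg (volume : Measure ℝ)
  have hemb := (Homeomorph.neg ℝ).measurableEmbedding
  have hsplit : {y : ℝ | |y| ∈ A} = A ∪ Neg.neg ⁻¹' A := by
    ext y
    rcases le_or_gt 0 y with hy | hy
    · simp [abs_of_nonneg hy, show -y ∉ A from fun h => by linarith [mem_Ioi.mp (hA0 h)]]
    · simp [abs_of_neg hy, show y ∉ A from fun h => by linarith [mem_Ioi.mp (hA0 h)]]
  have hdisj : Disjoint A (Neg.neg ⁻¹' A) := disjoint_left.mpr fun y hy hy' => by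
    linarith [mem_Ioi.mp (hA0 hy), mem_Ioi.mp (hA0 hy')]
  have hf_pre : IntegrableOn f (Neg.neg ⁻¹' A) := by
    simpa [Function.comp_def] using (hneg.integrableOn_comp_preimage hemb).mpr hf_neg
  rw [hsplit, setIntegral_union hdisj (hA.preimage measurable_neg) hf hf_pre,
    integral_add hf hf_neg]
  congr 1
  simpa using hneg.setIntegral_preimage_emb hemb (fun t => f (-t)) A

theorem intervalIntegral_deriv_div_eq {φ φ' : ℝ → ℝ} {a b : ℝ} (ha : 0 < a) (hab : a ≤ b)
    (hφ : ∀ t ∈ uIcc a b, HasDerivAt φ (φ' t) t) (hφ' : IntervalIntegrable φ' volume a b) :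
    ∫ t in a..b, φ' t / t = φ b / b - φ a / a + ∫ t in a..b, φ t / t ^ 2 := by
  have hpos : ∀ t ∈ uIcc a b, t ≠ 0 := fun t ht => by
    rw [uIcc_of_le hab] at ht; exact (ha.trans_le ht.1).ne'
  have hinv : ContinuousOn (fun t : ℝ => t⁻¹) (uIcc a b) := continuousOn_inv₀.mono hpos
  have hinv_sq : ContinuousOn (fun t : ℝ => -(t ^ 2)⁻¹) (uIcc a b) :=
    ((continuousOn_pow 2).inv₀ fun t ht => pow_ne_zero 2 (hpos t ht)).neg
  have hφc : ContinuousOn φ (uIcc a b) := fun t ht => (hφ t ht).continuousAt.continuousWithinAt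
  have hparts := intervalIntegral.integral_deriv_mul_eq_sub hφ
    (fun t ht => hasDerivAt_inv (hpos t ht)) hφ' hinv_sq.intervalIntegrable
  rw [intervalIntegral.integral_add (hφ'.mul_continuousOn hinv)
    (hφc.mul hinv_sq).intervalIntegrable (g := fun t => φ t * -(t ^ 2)⁻¹)] at hparts
  simp only [mul_neg, intervalIntegral.integral_neg, ← div_eq_mul_inv] at hparts
  linarith

theorem integrableOn_Ioi_inv_sq {c : ℝ} (hc : 0 < c) :
    IntegrableOn (fun t : ℝ => (t ^ 2)⁻¹) (Ioi c) := by
  refine (integrableOn_Ioi_rpow_of_lt (by norm_num : (-2 : ℝ) < -1) hc).congr_fun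
    (fun t ht => ?_) measurableSet_Ioi
  simp only [Real.rpow_neg (hc.trans ht).le, Real.rpow_two]

theorem integrableOn_Ici_div_sq {v : ℝ → ℝ} {C ε : ℝ} (hv : Continuous v)
    (hC : ∀ y, |v y| ≤ C) (hε : 0 < ε) : IntegrableOn (fun y => v y / y ^ 2) (Ici ε) := by
  rw [integrableOn_Ici_iff_integrableOn_Ioi]
  simp only [div_eq_mul_inv]
  exact (integrableOn_Ioi_inv_sq hε).bdd_mul hv.aestronglyMeasurable (.of_forall hC)

theorem integrableOn_Ioi_zero_of_abs_le {g : ℝ → ℝ} {A B : ℝ}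
    (hg : AEStronglyMeasurable g (volume.restrict (Ioi 0)))
    (h_near : ∀ t ∈ Ioc (0 : ℝ) 1, |g t| ≤ A) (h_far : ∀ t ∈ Ioi (1 : ℝ), |g t| ≤ B * (t ^ 2)⁻¹) :
    IntegrableOn g (Ioi 0) := by
  rw [← Ioc_union_Ioi_eq_Ioi zero_le_one]
  refine IntegrableOn.union ?_ ?_
  · refine .of_bound measure_Ioc_lt_top (hg.mono_set Ioc_subset_Ioi_self) A ?_
    exact (ae_restrict_iff' measurableSet_Ioc).mpr (.of_forall h_near)
  · refine ((integrableOn_Ioi_inv_sq one_pos).const_mul B).mono'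
      (hg.mono_set (Ioi_subset_Ioi zero_le_one)) ?_
    exact (ae_restrict_iff' measurableSet_Ioi).mpr (.of_forall h_far)

theorem setIntegral_annulus_eq {k : ℝ → ℝ} (hk : Continuous k) (x : ℝ) {ε R : ℝ} (hε : 0 < ε)
    (hεR : ε ≤ R) :
    ∫ y in {y | ε ≤ |x - y| ∧ |x - y| ≤ R}, k y / (x - y) =
      ∫ t in ε..R, (k (x - t) - k (x + t)) / t := by
  have hA0 : Icc ε R ⊆ Ioi 0 := fun t ht => hε.trans_le ht.1
  have hcont : ContinuousOn (fun t => k (x - t) / t) (Icc ε R) :=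
    (hk.comp (continuous_sub_left x)).continuousOn.div continuousOn_id
      fun t ht => (hA0 ht).ne'
  have hcont_neg : ContinuousOn (fun t => k (x - -t) / -t) (Icc ε R) :=
    (hk.comp ((continuous_sub_left x).comp continuous_neg)).continuousOn.div continuousOn_id.neg
      fun t ht => neg_ne_zero.mpr (hA0 ht).ne'
  have htranslate := (Measure.measurePreserving_sub_left volume x).setIntegral_preimage_emb
    (Homeomorph.subLeft x).measurableEmbedding (fun z => k (x - z) / z) {z | |z| ∈ Icc ε R}
  simp only [sub_sub_cancel] at htranslate
  rw [show {y | ε ≤ |x - y| ∧ |x - y| ≤ R} = (x - ·) ⁻¹' {z | |z| ∈ Icc ε R} from rfl,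
    htranslate, setIntegral_abs_mem_eq_add_neg measurableSet_Icc hA0 (hcont.integrableOn_Icc)
    hcont_neg.integrableOn_Icc, integral_Icc_eq_integral_Ioc,
    ← intervalIntegral.integral_of_le hεR]
  congr 1 with t
  rw [sub_neg_eq_add, div_neg, ← sub_eq_add_neg, sub_div]

def secondDiff (u : ℝ → ℝ) (x t : ℝ) : ℝ := 2 * u x - u (x + t) - u (x - t)

section secondDiff

variable {u : ℝ → ℝ} (x : ℝ) {M : ℝ} {K : ℝ≥0}

theorem hasDerivAt_secondDiff (hd : Differentiable ℝ u) (t : ℝ) :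
    HasDerivAt (secondDiff u x) (deriv u (x - t) - deriv u (x + t)) t :=
  (((hasDerivAt_const t (2 * u x)).sub ((hd (x + t)).hasDerivAt.comp_const_add x t)).sub
    ((hd (x - t)).hasDerivAt.comp_const_sub x t)).congr_deriv (by ring)

theorem abs_secondDiff_le (hM : ∀ y, |u y| ≤ M) (t : ℝ) :
    |secondDiff u x t| ≤ 4 * M := by
  have h₀ := abs_le.mp (hM x)
  have h₁ := abs_le.mp (hM (x + t))
  have h₂ := abs_le.mp (hM (x - t))
  rw [secondDiff, abs_le]
  constructor <;> linarith

theorem abs_secondDiff_le_sq (hd : Differentiable ℝ u) (hK : LipschitzWith K (deriv u))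
    {t : ℝ} (ht : 0 ≤ t) :
    |secondDiff u x t| ≤ 2 * K * t ^ 2 := by
  have hderiv : ∀ s ∈ Icc 0 t, ‖deriv u (x - s) - deriv u (x + s)‖ ≤ 2 * K * t := by
    intro s hs
    calc ‖deriv u (x - s) - deriv u (x + s)‖ ≤ K * ‖(x - s) - (x + s)‖ := by
          simpa only [dist_eq_norm] using hK.dist_le_mul (x - s) (x + s)
      _ = 2 * K * s := by
          rw [show (x - s) - (x + s) = -(2 * s) by ring, norm_neg, Real.norm_of_nonneg
            (by linarith [hs.1])]
          ring
      _ ≤ 2 * K * t := by gcongr; exact hs.2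
  have hmvt := (convex_Icc 0 t).norm_image_sub_le_of_norm_hasDerivWithin_le
    (fun s _ => (hasDerivAt_secondDiff x hd s).hasDerivWithinAt) hderiv
    (left_mem_Icc.mpr ht) (right_mem_Icc.mpr ht)
  have hzero : secondDiff u x 0 = 0 := by simp only [secondDiff, add_zero, sub_zero]; ring
  rw [hzero, sub_zero, sub_zero, Real.norm_eq_abs, Real.norm_of_nonneg ht] at hmvt
  linarith [sq t]

variable (hd : Differentiable ℝ u) (hM : ∀ y, |u y| ≤ M) (hK : LipschitzWith K (deriv u))
include hd hM hK

theorem integrableOn_secondDiff_div_sq :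
    IntegrableOn (fun t => secondDiff u x t / t ^ 2) (Ioi 0) := by
  have hcont : Continuous (secondDiff u x) :=
    continuous_iff_continuousAt.mpr fun t => (hasDerivAt_secondDiff x hd t).continuousAt
  refine integrableOn_Ioi_zero_of_abs_le (A := 2 * K) (B := 4 * M)
    (hcont.measurable.div (measurable_id.pow_const 2)).aestronglyMeasurable
    (fun t ht => ?_) (fun t ht => ?_)
  · have ht2 : 0 < t ^ 2 := pow_pos ht.1 2
    rw [abs_div, abs_of_pos ht2, div_le_iff₀ ht2]
    exact abs_secondDiff_le_sq x hd hK ht.1.le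
  · rw [abs_div, abs_of_pos (pow_pos (zero_lt_one.trans ht : (0:ℝ) < t) 2), div_eq_mul_inv]
    gcongr
    exact abs_secondDiff_le x hM t

theorem fracLapPV_one_secondDiff :
    fracLapPV 1 u x (∫ t in Ioi 0, secondDiff u x t / t ^ 2) := by
  have hpos : ∀ᶠ ε in 𝓝[>] (0 : ℝ), 0 < ε := self_mem_nhdsWithin
  have hlim := tendsto_setIntegral_of_eventually_mem (integrableOn_secondDiff_div_sq x hd hM hK)
    (fun ε => measurableSet_Ici) (hpos.mono fun ε hε t ht => hε.trans_le ht)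
    (ae_restrict_of_forall_mem measurableSet_Ioi fun t ht =>
      (eventually_le_nhds ht).filter_mono nhdsWithin_le_nhds)
  refine hlim.congr' (hpos.mono fun ε hε => ?_)
  have hcont := hd.continuous
  have hdiff : ∀ a, |u x - u a| ≤ 2 * M := fun a => by
    have h₀ := abs_le.mp (hM x)
    have h₁ := abs_le.mp (hM a)
    rw [abs_le]; constructor <;> linarith
  have hint := integrableOn_Ici_div_sq (v := fun y => u x - u (x + y)) (by fun_prop)
    (fun y => hdiff _) hε
  have hint_neg : IntegrableOn (fun y => (u x - u (x + -y)) / (-y) ^ 2) (Ici ε) := by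
    simpa only [neg_sq, ← sub_eq_add_neg] using
      integrableOn_Ici_div_sq (v := fun y => u x - u (x - y)) (by fun_prop) (fun y => hdiff _) hε
  have hintegrand : ∀ y : ℝ,
      (u x - u (x + y)) / |y| ^ ((1 : ℝ) + 1) = (u x - u (x + y)) / y ^ 2 := fun y => by
    norm_num [sq_abs]
  simp only [hintegrand]
  rw [show {y : ℝ | ε ≤ |y|} = {y | |y| ∈ Ici ε} from rfl,
    setIntegral_abs_mem_eq_add_neg measurableSet_Ici (fun t ht => hε.trans_le ht) hint hint_neg]
  refine setIntegral_congr_fun measurableSet_Ici fun t _ => ?_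
  rw [neg_sq, ← add_div, secondDiff, ← sub_eq_add_neg]
  ring

theorem tendsto_integral_annulus_deriv_div :
    Tendsto (fun p : ℝ × ℝ => ∫ y in {y | p.1 ≤ |x - y| ∧ |x - y| ≤ p.2}, deriv u y / (x - y))
      (𝓝[>] 0 ×ˢ atTop) (𝓝 (∫ t in Ioi 0, secondDiff u x t / t ^ 2)) := by
  have hev : ∀ᶠ p : ℝ × ℝ in 𝓝[>] 0 ×ˢ atTop, 0 < p.1 ∧ p.1 ≤ p.2 :=
    ((eventually_mem_set.mpr (Ioc_mem_nhdsGT one_pos)).prod_mk (eventually_ge_atTop 1)).mono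
      fun p ⟨h₁, h₂⟩ => ⟨h₁.1, h₁.2.trans h₂⟩
  have hbulk := tendsto_setIntegral_of_eventually_mem (integrableOn_secondDiff_div_sq x hd hM hK)
    (fun p => measurableSet_Ioc) (hev.mono fun p hp t ht => hp.1.trans ht.1)
    (ae_restrict_of_forall_mem measurableSet_Ioi fun t ht =>
      ((eventually_lt_nhds ht).filter_mono nhdsWithin_le_nhds).prod_mk (eventually_ge_atTop t))
  have hfar : Tendsto (fun R => secondDiff u x R / R) atTop (𝓝 0) := by
    refine squeeze_zero_norm' ((eventually_gt_atTop 0).mono fun R hR => ?_)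
      ((tendsto_const_nhds (x := 4 * M)).div_atTop tendsto_id)
    rw [Real.norm_eq_abs, abs_div, abs_of_pos hR]
    exact div_le_div_of_nonneg_right (abs_secondDiff_le x hM R) hR.le
  have hnear : Tendsto (fun ε => secondDiff u x ε / ε) (𝓝[>] 0) (𝓝 0) := by
    refine squeeze_zero_norm' (eventually_mem_nhdsWithin.mono fun ε (hε : 0 < ε) => ?_)
      (((continuous_const_mul (2 * (K : ℝ))).tendsto' 0 0 (mul_zero _)).mono_left
        nhdsWithin_le_nhds)
    rw [Real.norm_eq_abs, abs_div, abs_of_pos hε, div_le_iff₀ hε]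
    linarith [abs_secondDiff_le_sq x hd hK hε.le]
  have hlim := (hbulk.add (hfar.comp tendsto_snd)).sub (hnear.comp tendsto_fst)
  rw [add_zero, sub_zero] at hlim
  refine hlim.congr' (hev.mono fun p ⟨hp, hpR⟩ => ?_)
  dsimp only [Function.comp_apply]
  have hcont := hK.continuous
  rw [setIntegral_annulus_eq hcont x hp hpR,
    intervalIntegral_deriv_div_eq hp hpR (fun t _ => hasDerivAt_secondDiff x hd t)
      ((by fun_prop : Continuous fun t => deriv u (x - t) - deriv u (x + t)).intervalIntegrable
        _ _),
    intervalIntegral.integral_of_le hpR]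
  ring

end secondDiff

theorem Cb2.differentiable {u : ℝ → ℝ} (hu : Cb2 u) : Differentiable ℝ u :=
  hu.1.differentiable two_ne_zero

theorem Cb2.exists_lipschitzWith_deriv {u : ℝ → ℝ} (hu : Cb2 u) :
    ∃ K, LipschitzWith K (deriv u) := by
  obtain ⟨hC, -, -, M, hM⟩ := hu
  have hd : Differentiable ℝ (deriv u) :=
    ((contDiff_succ_iff_deriv (n := 1)).mp hC).2.2.differentiable one_ne_zero
  have hM0 : 0 ≤ M := (abs_nonneg _).trans (hM 0)
  exact ⟨M.toNNReal, lipschitzWith_of_nnnorm_deriv_le hd fun t => by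
    rw [Real.le_toNNReal_iff_coe_le hM0, coe_nnnorm]; exact hM t⟩

theorem stmt2 (u : ℝ → ℝ) (hu : Cb2 u) (x : ℝ) :
    ∃ I J : ℝ, fracLapPV 1 u x I ∧
      Tendsto (fun p : ℝ × ℝ => ∫ y in {y : ℝ | p.1 ≤ |x - y| ∧ |x - y| ≤ p.2},
          deriv u y / (x - y))
        ((nhdsWithin 0 (Set.Ioi 0)) ×ˢ atTop) (nhds J) ∧
      cAlpha 1 * I = 1 / Real.pi * J := by
  obtain ⟨M, hM⟩ := hu.2.1
  obtain ⟨K, hK⟩ := hu.exists_lipschitzWith_deriv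
  exact ⟨_, _, fracLapPV_one_secondDiff x hu.differentiable hM hK,
    tendsto_integral_annulus_deriv_div x hu.differentiable hM hK, by rw [cAlpha_one]⟩
end

section
/- Let β ∈ ℝ with β ≠ −1, let m ∈ ℕ be even (including m = 0), let a ≥ 0 and h > 0; if a = 0, assume additionally β > −1. Then there exists K > 0 (depending on β, m, a and h, but not on n) such that for every n ∈ ℕ (including 0), |∫_{x_n}^{x_{n+1}} x^β (x − x_{n+1/2})^m dx| ≤ K · h^{m+1} · x_{n+1/2}^{β}. -/
open Filter MeasureTheory Set

lemma aux11 (β : ℝ) (m : ℕ) (hm : Even m) (h p M : ℝ) (hh : 0 < h) (hp : 0 < p)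
    (hMb : ∀ x ∈ Set.Icc p (p + h), x ^ β ≤ M * (p + h / 2) ^ β) :
    |∫ x in p..(p + h), x ^ β * (x - (p + h / 2)) ^ m|
      ≤ M * (1 / 2 : ℝ) ^ m * h ^ (m + 1) * (p + h / 2) ^ β := by
  have hpq : p ≤ p + h := by linarith
  have hcont : ContinuousOn (fun x : ℝ => x ^ β * (x - (p + h / 2)) ^ m) (Set.uIcc p (p + h)) := by
    apply ContinuousOn.mul
    · apply ContinuousOn.rpow_const continuousOn_id
      intro x hx
      rw [Set.uIcc_of_le hpq] at hx
      exact Or.inl (by simp only [id]; intro h'; subst h'; linarith [hx.1])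
    · exact (Continuous.pow (by continuity) m).continuousOn
  have hfint : IntervalIntegrable (fun x : ℝ => x ^ β * (x - (p + h / 2)) ^ m)
      volume p (p + h) := hcont.intervalIntegrable
  have hnonneg : ∀ x ∈ Set.Icc p (p + h), 0 ≤ x ^ β * (x - (p + h / 2)) ^ m := by
    intro x hx
    exact mul_nonneg (Real.rpow_nonneg (by linarith [hx.1]) _) (hm.pow_nonneg _)
  have hint_nonneg : 0 ≤ ∫ x in p..(p + h), x ^ β * (x - (p + h / 2)) ^ m :=
    intervalIntegral.integral_nonneg hpq hnonneg
  have hMc : 0 ≤ M * (p + h / 2) ^ β :=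
    le_trans (Real.rpow_nonneg hp.le _) (hMb p ⟨le_refl _, hpq⟩)
  have hmono : (∫ x in p..(p + h), x ^ β * (x - (p + h / 2)) ^ m)
      ≤ ∫ _ in p..(p + h), M * (p + h / 2) ^ β * (h / 2) ^ m := by
    apply intervalIntegral.integral_mono_on hpq hfint intervalIntegrable_const
    intro x hx
    have h1 : (x - (p + h / 2)) ^ m ≤ (h / 2) ^ m := by
      rw [← hm.pow_abs]
      apply pow_le_pow_left₀ (abs_nonneg _)
      rw [abs_le]; constructor <;> [linarith [hx.1]; linarith [hx.2]]
    exact mul_le_mul (hMb x hx) h1 (hm.pow_nonneg _) hMc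
  rw [abs_of_nonneg hint_nonneg]
  calc (∫ x in p..(p + h), x ^ β * (x - (p + h / 2)) ^ m)
      ≤ ∫ _ in p..(p + h), M * (p + h / 2) ^ β * (h / 2) ^ m := hmono
    _ = h * (M * (p + h / 2) ^ β * (h / 2) ^ m) := by
        rw [intervalIntegral.integral_const]; simp [smul_eq_mul]
    _ = M * (1 / 2 : ℝ) ^ m * h ^ (m + 1) * (p + h / 2) ^ β := by ring

theorem stmt11 (β : ℝ) (hβ : β ≠ -1) (m : ℕ) (hm : Even m) (a h : ℝ) (ha : 0 ≤ a) (hh : 0 < h)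
    (h0 : a = 0 → -1 < β) :
    ∃ K : ℝ, 0 < K ∧ ∀ n : ℕ,
      |∫ x in (a + (n : ℝ) * h)..(a + ((n : ℝ) + 1) * h),
          x ^ β * (x - (a + ((n : ℝ) + 1 / 2) * h)) ^ m| ≤
        K * h ^ (m + 1) * (a + ((n : ℝ) + 1 / 2) * h) ^ β := by
  set d : ℝ := if a = 0 then h else a with hdef
  have hd : 0 < d := by
    by_cases h' : a = 0
    · simp [hdef, h', hh]
    · simp only [hdef, h', if_false]; exact lt_of_le_of_ne ha (Ne.symm h')
  set B : ℝ := 1 + h / (2 * d) with hBdef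
  have hBpos : 0 < B := by positivity
  have hB : 1 ≤ B := by
    have h1 : 0 < h / (2 * d) := by positivity
    rw [hBdef]; linarith
  set M : ℝ := (2 : ℝ) ^ |β| * B ^ |β| with hMdef
  have hM2 : (1 : ℝ) ≤ (2 : ℝ) ^ |β| := Real.one_le_rpow one_le_two (abs_nonneg _)
  have hMB : (1 : ℝ) ≤ B ^ |β| := Real.one_le_rpow hB (abs_nonneg _)
  have hM1 : (1 : ℝ) ≤ M := one_le_mul_of_one_le_of_one_le hM2 hMB
  set K0 : ℝ := (1 / 2 : ℝ) ^ m * (2 : ℝ) ^ |β| / |β + 1| with hK0def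
  have hβ1 : |β + 1| ≠ 0 := by
    simp only [ne_eq, abs_eq_zero]
    intro hc; exact hβ (by linarith)
  have hK0 : 0 < K0 := by
    have : 0 < |β + 1| := lt_of_le_of_ne (abs_nonneg _) (Ne.symm hβ1)
    positivity
  refine ⟨M * (1 / 2 : ℝ) ^ m + K0, by positivity, ?_⟩
  intro n
  by_cases hc : a = 0 ∧ n = 0
  · -- special case: a = 0, n = 0
    obtain ⟨ha0, hn0⟩ := hc
    have hβ' : -1 < β := h0 ha0
    have hβ1' : 0 < β + 1 := by linarith
    subst ha0 hn0
    simp only [Nat.cast_zero, zero_mul, zero_add, add_zero, one_mul, zero_add]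
    norm_num
    rw [show (1 / 2 : ℝ) * h = h / 2 from by ring]
    have hfint : IntervalIntegrable (fun x : ℝ => x ^ β * (x - h / 2) ^ m)
        volume 0 h := by
      apply (intervalIntegral.intervalIntegrable_rpow' hβ').mul_continuousOn
      exact (Continuous.pow (by continuity) m).continuousOn
    have hgint : IntervalIntegrable (fun x : ℝ => x ^ β * (h / 2) ^ m) volume 0 h :=
      (intervalIntegral.intervalIntegrable_rpow' hβ').mul_const _
    have hnonneg : ∀ x ∈ Set.Icc (0:ℝ) h, 0 ≤ x ^ β * (x - h / 2) ^ m := by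
      intro x hx
      exact mul_nonneg (Real.rpow_nonneg hx.1 _) (hm.pow_nonneg _)
    have hint_nonneg : 0 ≤ ∫ x in (0:ℝ)..h, x ^ β * (x - h / 2) ^ m :=
      intervalIntegral.integral_nonneg hh.le hnonneg
    have hmono : (∫ x in (0:ℝ)..h, x ^ β * (x - h / 2) ^ m)
        ≤ ∫ x in (0:ℝ)..h, x ^ β * (h / 2) ^ m := by
      apply intervalIntegral.integral_mono_on hh.le hfint hgint
      intro x hx
      apply mul_le_mul_of_nonneg_left _ (Real.rpow_nonneg hx.1 _)
      rw [← hm.pow_abs]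
      apply pow_le_pow_left₀ (abs_nonneg _)
      rw [abs_le]; constructor <;> [linarith [hx.1]; linarith [hx.2]]
    have hval : (∫ x in (0:ℝ)..h, x ^ β * (h / 2) ^ m)
        = h ^ (β + 1) / (β + 1) * (h / 2) ^ m := by
      rw [intervalIntegral.integral_mul_const, integral_rpow (Or.inl hβ'),
        Real.zero_rpow (by linarith : β + 1 ≠ 0)]
      ring
    have heq : h ^ (β + 1) / (β + 1) * (h / 2) ^ m
        = (1 / 2 : ℝ) ^ m * (2 : ℝ) ^ β / (β + 1) * h ^ (m + 1) * (h / 2) ^ β := by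
      rw [Real.rpow_add hh, Real.rpow_one, Real.div_rpow hh.le (by norm_num : (0:ℝ) ≤ 2)]
      have h2β : (0:ℝ) < (2:ℝ) ^ β := Real.rpow_pos_of_pos two_pos β
      field_simp
      ring
    have hKle : (1 / 2 : ℝ) ^ m * (2 : ℝ) ^ β / (β + 1) ≤ K0 := by
      rw [hK0def, abs_of_pos hβ1']
      gcongr _ * ?_ / _
      exact Real.rpow_le_rpow_of_exponent_le one_le_two (le_abs_self β)
    have hhalf : (0:ℝ) ≤ (h / 2) ^ β := Real.rpow_nonneg (by linarith) β
    have hfinal : (∫ x in (0:ℝ)..h, x ^ β * (x - h / 2) ^ m)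
        ≤ (M * (1 / 2 : ℝ) ^ m + K0) * h ^ (m + 1) * (h / 2) ^ β := by
      calc (∫ x in (0:ℝ)..h, x ^ β * (x - h / 2) ^ m)
          ≤ ∫ x in (0:ℝ)..h, x ^ β * (h / 2) ^ m := hmono
        _ = (1 / 2 : ℝ) ^ m * (2 : ℝ) ^ β / (β + 1) * h ^ (m + 1) * (h / 2) ^ β := by
            rw [hval, heq]
        _ ≤ K0 * h ^ (m + 1) * (h / 2) ^ β := by
            apply mul_le_mul_of_nonneg_right _ hhalf
            exact mul_le_mul_of_nonneg_right hKle (by positivity)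
        _ ≤ (M * (1 / 2 : ℝ) ^ m + K0) * h ^ (m + 1) * (h / 2) ^ β := by
            apply mul_le_mul_of_nonneg_right _ hhalf
            apply mul_le_mul_of_nonneg_right _ (by positivity)
            have h1 : (0:ℝ) ≤ M * (1 / 2 : ℝ) ^ m :=
              mul_nonneg (by linarith) (by positivity)
            linarith
    calc |∫ x in (0:ℝ)..h, x ^ β * (x - h / 2) ^ m|
        = ∫ x in (0:ℝ)..h, x ^ β * (x - h / 2) ^ m := abs_of_nonneg hint_nonneg
      _ ≤ _ := hfinal
  · -- generic case
    push_neg at hc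
    set p : ℝ := a + (n : ℝ) * h with hpdef
    have hp : d ≤ p := by
      by_cases h' : a = 0
      · have hn : n ≠ 0 := hc h'
        have hn1 : (1 : ℝ) ≤ (n : ℝ) := by exact_mod_cast Nat.one_le_iff_ne_zero.mpr hn
        simp only [hdef, h', if_true, hpdef, h', zero_add]
        nlinarith
      · simp only [hdef, h', if_false, hpdef]
        nlinarith [Nat.cast_nonneg (α := ℝ) n]
    have hp0 : 0 < p := lt_of_lt_of_le hd hp
    have hc0 : 0 < p + h / 2 := by linarith
    have e1 : a + ((n : ℝ) + 1) * h = p + h := by rw [hpdef]; ring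
    have e2 : a + ((n : ℝ) + 1 / 2) * h = p + h / 2 := by rw [hpdef]; ring
    rw [e1, e2]
    have hMb : ∀ x ∈ Set.Icc p (p + h), x ^ β ≤ M * (p + h / 2) ^ β := by
      intro x hx
      have hx0 : 0 < x := lt_of_lt_of_le hp0 hx.1
      rcases le_or_gt 0 β with hβpos | hβneg
      · have h2c : x ≤ 2 * (p + h / 2) := by linarith [hx.2, hp0]
        calc x ^ β ≤ (2 * (p + h / 2)) ^ β := Real.rpow_le_rpow hx0.le h2c hβpos
          _ = (2:ℝ) ^ β * (p + h / 2) ^ β := Real.mul_rpow (by norm_num) hc0.le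
          _ ≤ M * (p + h / 2) ^ β := by
              apply mul_le_mul_of_nonneg_right _ (Real.rpow_nonneg hc0.le _)
              calc (2:ℝ) ^ β ≤ (2:ℝ) ^ |β| :=
                    Real.rpow_le_rpow_of_exponent_le one_le_two (le_abs_self β)
                _ ≤ M := by
                    rw [hMdef]
                    exact le_mul_of_one_le_right (by positivity) hMB
      · have hcBp : p + h / 2 ≤ B * p := by
          have hd2 : h / 2 = h * d / (2 * d) := by field_simp
          have : h * d / (2 * d) ≤ h * p / (2 * d) := by gcongr
          have hBp : B * p = p + h * p / (2 * d) := by rw [hBdef]; ring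
          linarith
        have h1 : (B * p) ^ β ≤ (p + h / 2) ^ β :=
          Real.rpow_le_rpow_of_nonpos hc0 hcBp hβneg.le
        have h2 : (B * p) ^ β = B ^ β * p ^ β := Real.mul_rpow hBpos.le hp0.le
        have h3 : x ^ β ≤ p ^ β := Real.rpow_le_rpow_of_nonpos hp0 hx.1 hβneg.le
        have hBβ : (0:ℝ) < B ^ β := Real.rpow_pos_of_pos hBpos β
        have h4 : p ^ β ≤ B ^ (-β) * (p + h / 2) ^ β := by
          rw [h2] at h1
          have := mul_le_mul_of_nonneg_left h1 (le_of_lt (Real.rpow_pos_of_pos hBpos (-β)))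
          calc p ^ β = B ^ (-β) * (B ^ β * p ^ β) := by
                rw [← mul_assoc, ← Real.rpow_add hBpos]; norm_num
            _ ≤ B ^ (-β) * (p + h / 2) ^ β := this
        have h5 : B ^ (-β) = B ^ |β| := by rw [abs_of_neg hβneg]
        calc x ^ β ≤ p ^ β := h3
          _ ≤ B ^ |β| * (p + h / 2) ^ β := by rw [← h5]; exact h4
          _ ≤ M * (p + h / 2) ^ β := by
              apply mul_le_mul_of_nonneg_right _ (Real.rpow_nonneg hc0.le _)
              rw [hMdef]
              exact le_mul_of_one_le_left (Real.rpow_nonneg hBpos.le _) hM2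
    have key := aux11 β m hm h p M hh hp0 hMb
    calc |∫ x in p..(p + h), x ^ β * (x - (p + h / 2)) ^ m|
        ≤ M * (1 / 2 : ℝ) ^ m * h ^ (m + 1) * (p + h / 2) ^ β := key
      _ ≤ (M * (1 / 2 : ℝ) ^ m + K0) * h ^ (m + 1) * (p + h / 2) ^ β := by
          apply mul_le_mul_of_nonneg_right _ (Real.rpow_nonneg hc0.le _)
          apply mul_le_mul_of_nonneg_right _ (by positivity)
          linarith [hK0]
end

section
/- Let β ∈ ℝ with β ≠ −1, let m ∈ ℕ be odd, let a ≥ 0 and h > 0; if a = 0, assume additionally β > −1. Then there exists K > 0 (depending on β, m, a and h, but not on n) such that for every n ∈ ℕ (including 0), |∫_{x_n}^{x_{n+1}} x^β (x − x_{n+1/2})^m dx| ≤ K · h^{m+2} · x_{n+1/2}^{β−1}. -/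
open Filter MeasureTheory Set

lemma aux12 (β : ℝ) (m : ℕ) (hm : Odd m) (h c : ℝ) (hh : 0 < h) (hc : 3*h/2 ≤ c) :
    |∫ x in (c - h/2)..(c + h/2), x ^ β * (x - c) ^ m| ≤
      (|β| + 1) * max ((2/3:ℝ) ^ (β-1)) ((2:ℝ) ^ (β-1)) * h ^ (m+2) * c ^ (β-1) := by
  set D : ℝ := max ((2/3:ℝ) ^ (β-1)) ((2:ℝ) ^ (β-1)) with hDdef
  have hD0 : 0 < D := lt_max_of_lt_right (Real.rpow_pos_of_pos two_pos _)
  have hc0 : 0 < c := lt_of_lt_of_le (by positivity) hc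
  have hL0 : 0 < c - h/2 := by linarith
  have hLc : 2*c/3 ≤ c - h/2 := by linarith
  have hRc : c + h/2 ≤ 2*c := by linarith
  have hLR : c - h/2 ≤ c + h/2 := by linarith
  have hcp : 0 ≤ c ^ (β-1) := (Real.rpow_pos_of_pos hc0 _).le
  -- bound for t in the window
  have tb : ∀ t : ℝ, 2*c/3 ≤ t → t ≤ 2*c → t ^ (β-1) ≤ D * c ^ (β-1) := by
    intro t ht1 ht2
    rcases le_or_gt 0 (β-1) with hb | hb
    · calc t ^ (β-1) ≤ (2*c) ^ (β-1) :=
            Real.rpow_le_rpow (by linarith) ht2 hb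
        _ = 2 ^ (β-1) * c ^ (β-1) := Real.mul_rpow (by norm_num) hc0.le
        _ ≤ D * c ^ (β-1) := mul_le_mul_of_nonneg_right (le_max_right _ _) hcp
    · calc t ^ (β-1) ≤ (2*c/3) ^ (β-1) :=
            Real.rpow_le_rpow_of_nonpos (by linarith) ht1 hb.le
        _ = (2/3) ^ (β-1) * c ^ (β-1) := by
            rw [show 2*c/3 = (2/3)*c by ring, Real.mul_rpow (by norm_num) hc0.le]
        _ ≤ D * c ^ (β-1) := mul_le_mul_of_nonneg_right (le_max_left _ _) hcp
  -- MVT-type bound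
  have mvt : ∀ x : ℝ, 2*c/3 ≤ x → x ≤ 2*c →
      |x ^ β - c ^ β| ≤ |β| * (D * c ^ (β-1)) * |x - c| := by
    intro x hx1 hx2
    by_cases hβ0 : β = 0
    · simp only [hβ0, Real.rpow_zero, sub_self, abs_zero]
      positivity
    · have hx0 : 0 < x := by linarith
      have hne : (0:ℝ) ∉ Set.uIcc c x := by
        intro h0
        rw [Set.mem_uIcc] at h0
        rcases h0 with ⟨_, h2⟩ | ⟨_, h2⟩ <;> linarith
      have hb1 : β - 1 ≠ -1 := by
        intro hcon; apply hβ0; linarith [sub_eq_iff_eq_add.mp hcon]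
      have hkey : ∫ t in c..x, β * t ^ (β-1) = x ^ β - c ^ β := by
        rw [intervalIntegral.integral_const_mul, integral_rpow (Or.inr ⟨hb1, hne⟩)]
        rw [show β - 1 + 1 = β by ring]
        field_simp
      rw [← hkey]
      have hb := intervalIntegral.norm_integral_le_of_norm_le_const
        (a := c) (b := x) (C := |β| * (D * c ^ (β-1)))
        (f := fun t => β * t ^ (β-1)) ?_
      · simpa [Real.norm_eq_abs, abs_mul, abs_sub_comm x c] using hb
      · intro t ht
        have ht' := Set.uIoc_subset_uIcc ht
        have h1 : 2*c/3 ≤ t ∧ t ≤ 2*c := by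
          rcases Set.mem_uIcc.mp ht' with ⟨u1, u2⟩ | ⟨u1, u2⟩ <;> constructor <;> linarith
        have ht0 : 0 < t := by linarith [h1.1]
        rw [Real.norm_eq_abs, abs_mul, abs_of_pos (Real.rpow_pos_of_pos ht0 _)]
        exact mul_le_mul_of_nonneg_left (tb t h1.1 h1.2) (abs_nonneg β)
  -- the symmetric integral vanishes
  have hzero : ∫ x in (c - h/2)..(c + h/2), (x - c) ^ m = 0 := by
    rw [intervalIntegral.integral_comp_sub_right (fun x => x ^ m) c, integral_pow,
      show c + h/2 - c = h/2 by ring, show c - h/2 - c = -(h/2) by ring,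
      hm.add_one.neg_pow, sub_self, zero_div]
  -- integrability
  have hcontOn : ContinuousOn (fun x : ℝ => x ^ β * (x - c) ^ m)
      (Set.uIcc (c - h/2) (c + h/2)) := by
    apply ContinuousOn.mul
    · apply ContinuousOn.rpow_const continuousOn_id
      intro x hx
      rw [Set.uIcc_of_le hLR] at hx
      exact Or.inl (ne_of_gt (lt_of_lt_of_le hL0 hx.1))
    · exact ((continuous_id.sub continuous_const).pow m).continuousOn
  have int1 : IntervalIntegrable (fun x : ℝ => x ^ β * (x - c) ^ m) volume
      (c - h/2) (c + h/2) := hcontOn.intervalIntegrable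
  have int2 : IntervalIntegrable (fun x : ℝ => c ^ β * (x - c) ^ m) volume
      (c - h/2) (c + h/2) :=
    (continuous_const.mul ((continuous_id.sub continuous_const).pow m)).intervalIntegrable _ _
  have hsplit : ∫ x in (c - h/2)..(c + h/2), (x ^ β - c ^ β) * (x - c) ^ m
      = ∫ x in (c - h/2)..(c + h/2), x ^ β * (x - c) ^ m := by
    have e : ∫ x in (c - h/2)..(c + h/2), (x ^ β - c ^ β) * (x - c) ^ m
        = (∫ x in (c - h/2)..(c + h/2), x ^ β * (x - c) ^ m)
          - ∫ x in (c - h/2)..(c + h/2), c ^ β * (x - c) ^ m := by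
      simp_rw [sub_mul]
      exact intervalIntegral.integral_sub int1 int2
    rw [e, intervalIntegral.integral_const_mul, hzero, mul_zero, sub_zero]
  rw [← hsplit]
  have hbound := intervalIntegral.norm_integral_le_of_norm_le_const
    (a := c - h/2) (b := c + h/2)
    (C := (|β| + 1) * (D * c ^ (β-1)) * (h/2) ^ (m+1))
    (f := fun x => (x ^ β - c ^ β) * (x - c) ^ m) ?_
  · rw [Real.norm_eq_abs, show c + h/2 - (c - h/2) = h by ring, abs_of_pos hh] at hbound
    refine le_trans hbound ?_
    calc (|β| + 1) * (D * c ^ (β-1)) * (h/2) ^ (m+1) * h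
        = ((|β| + 1) * D * c ^ (β-1)) * ((h/2) ^ (m+1) * h) := by ring
      _ ≤ ((|β| + 1) * D * c ^ (β-1)) * (h ^ (m+1) * h) := by
          apply mul_le_mul_of_nonneg_left
          · exact mul_le_mul_of_nonneg_right
              (pow_le_pow_left₀ (by positivity) (by linarith) _) hh.le
          · positivity
      _ = (|β| + 1) * D * h ^ (m+2) * c ^ (β-1) := by ring
  · intro x hx
    rw [Set.uIoc_of_le hLR] at hx
    have hx1 : 2*c/3 ≤ x := by linarith [hx.1]
    have hx2 : x ≤ 2*c := by linarith [hx.2]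
    have habs : |x - c| ≤ h/2 := abs_le.mpr ⟨by linarith [hx.1], by linarith [hx.2]⟩
    rw [Real.norm_eq_abs, abs_mul, abs_pow]
    calc |x ^ β - c ^ β| * |x - c| ^ m
        ≤ (|β| * (D * c ^ (β-1)) * (h/2)) * (h/2) ^ m := by
          apply mul_le_mul _ (pow_le_pow_left₀ (abs_nonneg _) habs m)
            (pow_nonneg (abs_nonneg _) m) (by positivity)
          exact le_trans (mvt x hx1 hx2)
            (mul_le_mul_of_nonneg_left habs (by positivity))
      _ ≤ (|β| + 1) * (D * c ^ (β-1)) * (h/2) ^ (m+1) := by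
          have h1 : |β| * (D * c ^ (β-1)) ≤ (|β| + 1) * (D * c ^ (β-1)) := by
            nlinarith [mul_nonneg hD0.le hcp]
          have h2 : (0:ℝ) ≤ (h/2) ^ (m+1) := by positivity
          calc |β| * (D * c ^ (β-1)) * (h/2) * (h/2) ^ m
              = |β| * (D * c ^ (β-1)) * (h/2) ^ (m+1) := by rw [pow_succ]; ring
            _ ≤ (|β| + 1) * (D * c ^ (β-1)) * (h/2) ^ (m+1) :=
              mul_le_mul_of_nonneg_right h1 h2

theorem stmt12 (β : ℝ) (hβ : β ≠ -1) (m : ℕ) (hm : Odd m) (a h : ℝ) (ha : 0 ≤ a) (hh : 0 < h)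
    (h0 : a = 0 → -1 < β) :
    ∃ K : ℝ, 0 < K ∧ ∀ n : ℕ,
      |∫ x in (a + (n : ℝ) * h)..(a + ((n : ℝ) + 1) * h),
          x ^ β * (x - (a + ((n : ℝ) + 1 / 2) * h)) ^ m| ≤
        K * h ^ (m + 2) * (a + ((n : ℝ) + 1 / 2) * h) ^ (β - 1) := by
  set D : ℝ := max ((2/3:ℝ) ^ (β-1)) ((2:ℝ) ^ (β-1)) with hDdef
  have hc00 : (0:ℝ) < a + ((0:ℝ) + 1/2) * h := by linarith
  set P : ℝ := h ^ (m+2) * (a + ((0:ℝ) + 1/2) * h) ^ (β-1) with hPdef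
  have hP : 0 < P := mul_pos (pow_pos hh _) (Real.rpow_pos_of_pos hc00 _)
  set I₀ : ℝ := |∫ x in (a + (0:ℝ) * h)..(a + ((0:ℝ) + 1) * h),
      x ^ β * (x - (a + ((0:ℝ) + 1/2) * h)) ^ m| with hI0
  refine ⟨max ((|β| + 1) * D) (I₀ / P + 1), ?_, ?_⟩
  · refine lt_of_lt_of_le ?_ (le_max_right _ _)
    have : 0 ≤ I₀ / P := div_nonneg (abs_nonneg _) hP.le
    linarith
  · intro n
    cases n with
    | zero =>
      simp only [Nat.cast_zero]
      have h1 : I₀ ≤ (I₀ / P + 1) * P := by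
        rw [add_mul, div_mul_cancel₀ _ hP.ne', one_mul]
        linarith
      have h2 : (I₀ / P + 1) * P ≤ max ((|β| + 1) * D) (I₀ / P + 1) * P :=
        mul_le_mul_of_nonneg_right (le_max_right _ _) hP.le
      calc I₀ ≤ max ((|β| + 1) * D) (I₀ / P + 1) * P := le_trans h1 h2
        _ = max ((|β| + 1) * D) (I₀ / P + 1) * h ^ (m+2) * (a + ((0:ℝ) + 1/2) * h) ^ (β-1) := by
            rw [hPdef]; ring
    | succ k =>
      set c : ℝ := a + (((k:ℝ) + 1) + 1/2) * h with hcdef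
      have hkh : 0 ≤ (k:ℝ) * h := mul_nonneg k.cast_nonneg hh.le
      have hc : 3*h/2 ≤ c := by rw [hcdef]; nlinarith
      have hc0 : 0 < c := lt_of_lt_of_le (by positivity) hc
      have e1 : a + ((k+1:ℕ) : ℝ) * h = c - h/2 := by push_cast; ring
      have e2 : a + (((k+1:ℕ) : ℝ) + 1) * h = c + h/2 := by push_cast; ring
      have e3 : a + (((k+1:ℕ) : ℝ) + 1/2) * h = c := by push_cast; ring
      rw [e1, e2, e3]
      refine le_trans (aux12 β m hm h c hh hc) ?_
      apply mul_le_mul_of_nonneg_right _ (Real.rpow_pos_of_pos hc0 _).le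
      exact mul_le_mul_of_nonneg_right (le_max_left _ _) (pow_nonneg hh.le _)
end

section
/- Let 0 ≤ a < b and γ ∈ ℝ. Then there exists a constant K_γ ∈ (0,∞) (depending on a, b, γ but not on N) such that for every N ∈ ℕ with N ≥ 1, setting h = (b−a)/N and x_{n+1/2} = a + (n+1/2)h, the sum S_N = h · ∑_{n=0}^{N−1} x_{n+1/2}^{γ} satisfies: |S_N| < K_γ · h^{γ+1} if a = 0 and γ < −1; |S_N| < K_γ − ln(h/2) if a = 0 and γ = −1; and |S_N| < K_γ otherwise (i.e., if a > 0, or if a = 0 and γ > −1). -/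
/-!
If `a > 0` or `γ ≥ 0`, every summand is at most `max (a ^ γ) (b ^ γ)`, so
`S_N ≤ (b - a) * max (a ^ γ) (b ^ γ)`. If `a = 0`, then `S_N = h ^ (γ + 1) * ∑_{n < N} (n + 1/2) ^ γ`,
and for `γ ≤ 0` the summand is antitone, so the sum is at most its first term `2 ^ (-γ)` plus
`∫_{1/2}^{N - 1/2} x ^ γ dx`. That integral is bounded when `γ < -1`, equals `log (2N - 1)` when
`γ = -1`, and is at most `N ^ (γ + 1) / (γ + 1)` when `-1 < γ < 0`, which after multiplying by
`h ^ (γ + 1)` is a constant since `N * h = b`.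
-/

open Set Real

theorem AntitoneOn.sum_range_succ_le_add_integral {f : ℝ → ℝ} {x₀ : ℝ} {M : ℕ}
    (hf : AntitoneOn f (Icc x₀ (x₀ + M))) :
    ∑ i ∈ Finset.range (M + 1), f (x₀ + i) ≤ f x₀ + ∫ x in x₀..x₀ + M, f x := by
  rw [Finset.sum_range_succ', Nat.cast_zero, add_zero, add_comm]
  exact add_le_add_right hf.sum_le_integral _

theorem sum_range_succ_add_half_rpow_le {γ : ℝ} (hγ : γ ≤ 0) (M : ℕ) :
    ∑ n ∈ Finset.range (M + 1), ((n : ℝ) + 1 / 2) ^ γ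
      ≤ (1 / 2) ^ γ + ∫ x in (1 / 2)..(1 / 2 + M), x ^ γ := by
  have hf : AntitoneOn (fun x : ℝ => x ^ γ) (Icc (1 / 2) (1 / 2 + M)) :=
    (antitoneOn_rpow_Ioi_of_exponent_nonpos hγ).mono fun x hx => by
      simp only [mem_Ioi]; linarith [hx.1]
  simpa only [add_comm (1 / 2 : ℝ)] using hf.sum_range_succ_le_add_integral

section

variable {γ : ℝ} {N : ℕ}

theorem sum_range_add_half_rpow_le_of_lt_neg_one (hγ : γ < -1) (hN : 1 ≤ N) :
    ∑ n ∈ Finset.range N, ((n : ℝ) + 1 / 2) ^ γ ≤ (1 / 2) ^ γ - (1 / 2) ^ (γ + 1) / (γ + 1) := by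
  obtain ⟨M, rfl⟩ := Nat.exists_eq_add_of_le' hN
  refine (sum_range_succ_add_half_rpow_le (by linarith) M).trans ?_
  rw [integral_rpow (Or.inr ⟨hγ.ne, notMem_uIcc_of_lt (by norm_num) (by positivity)⟩)]
  have : (1 / 2 + (M : ℝ)) ^ (γ + 1) / (γ + 1) ≤ 0 :=
    div_nonpos_of_nonneg_of_nonpos (by positivity) (by linarith)
  rw [sub_div]
  linarith

theorem sum_range_add_half_rpow_le_of_neg_one_lt (h₁ : -1 < γ) (h₀ : γ ≤ 0) (hN : 1 ≤ N) :
    ∑ n ∈ Finset.range N, ((n : ℝ) + 1 / 2) ^ γ ≤ (1 / 2) ^ γ + (N : ℝ) ^ (γ + 1) / (γ + 1) := by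
  obtain ⟨M, rfl⟩ := Nat.exists_eq_add_of_le' hN
  refine (sum_range_succ_add_half_rpow_le h₀ M).trans ?_
  rw [integral_rpow (Or.inl h₁)]
  have hγ₁ : 0 < γ + 1 := by linarith
  gcongr
  calc (1 / 2 + (M : ℝ)) ^ (γ + 1) - (1 / 2) ^ (γ + 1) ≤ (1 / 2 + (M : ℝ)) ^ (γ + 1) :=
        sub_le_self _ (by positivity)
    _ ≤ ((M + 1 : ℕ) : ℝ) ^ (γ + 1) := by gcongr; push_cast; linarith

theorem sum_range_add_half_inv_le (hN : 1 ≤ N) :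
    ∑ n ∈ Finset.range N, ((n : ℝ) + 1 / 2) ^ (-1 : ℝ) ≤ 2 + log (2 * N) := by
  obtain ⟨M, rfl⟩ := Nat.exists_eq_add_of_le' hN
  refine (sum_range_succ_add_half_rpow_le (by norm_num) M).trans ?_
  simp only [rpow_neg_one]
  rw [integral_inv_of_pos (by norm_num) (by positivity), show ((1 : ℝ) / 2)⁻¹ = 2 by norm_num]
  gcongr
  push_cast
  linarith

end

noncomputable def midpointSum (a b γ : ℝ) (N : ℕ) : ℝ :=
  (b - a) / N * ∑ n ∈ Finset.range N, (a + ((n : ℝ) + 1 / 2) * ((b - a) / N)) ^ γ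

section

variable {a b γ : ℝ} {N : ℕ}

theorem midpoint_mem_Icc (hab : a ≤ b) {n : ℕ} (hn : n < N) :
    a + ((n : ℝ) + 1 / 2) * ((b - a) / N) ∈ Icc a b := by
  have hN : (0 : ℝ) < N := by exact_mod_cast n.zero_le.trans_lt hn
  have hn' : (n : ℝ) + 1 / 2 ≤ N := by
    have : (n : ℝ) + 1 ≤ N := by exact_mod_cast hn
    linarith
  have hh : 0 ≤ (b - a) / N := div_nonneg (sub_nonneg.mpr hab) hN.le
  refine ⟨le_add_of_nonneg_right (mul_nonneg (by positivity) hh), ?_⟩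
  calc a + ((n : ℝ) + 1 / 2) * ((b - a) / N) ≤ a + N * ((b - a) / N) := by gcongr
    _ = b := by field_simp; ring

theorem midpointSum_nonneg (ha : 0 ≤ a) (hab : a ≤ b) : 0 ≤ midpointSum a b γ N :=
  mul_nonneg (div_nonneg (sub_nonneg.mpr hab) N.cast_nonneg) <| Finset.sum_nonneg
    fun _ hn => rpow_nonneg (ha.trans (midpoint_mem_Icc hab (Finset.mem_range.mp hn)).1) γ

theorem midpointSum_le_of_forall_rpow_le (hab : a ≤ b) (hN : 1 ≤ N) {C : ℝ}
    (hC : ∀ x ∈ Icc a b, x ^ γ ≤ C) : midpointSum a b γ N ≤ (b - a) * C := by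
  have hN' : (N : ℝ) ≠ 0 := by positivity
  have hsum := Finset.sum_le_card_nsmul (Finset.range N) _ C
    fun n hn => hC _ (midpoint_mem_Icc hab (Finset.mem_range.mp hn))
  rw [Finset.card_range, nsmul_eq_mul] at hsum
  calc midpointSum a b γ N ≤ (b - a) / N * (N * C) :=
        mul_le_mul_of_nonneg_left hsum (div_nonneg (sub_nonneg.mpr hab) N.cast_nonneg)
    _ = (b - a) * C := by field_simp

theorem rpow_le_max_of_mem_Icc {x : ℝ} (ha : 0 ≤ a) (h : 0 < a ∨ 0 ≤ γ) (hx : x ∈ Icc a b) :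
    x ^ γ ≤ max (a ^ γ) (b ^ γ) := by
  rcases le_or_gt 0 γ with hγ | hγ
  · exact le_max_of_le_right (rpow_le_rpow (ha.trans hx.1) hx.2 hγ)
  · exact le_max_of_le_left (rpow_le_rpow_of_nonpos (h.resolve_right hγ.not_ge) hx.1 hγ.le)

theorem midpointSum_zero_left (hb : 0 < b) (hN : 1 ≤ N) :
    midpointSum 0 b γ N = (b / N) ^ (γ + 1) * ∑ n ∈ Finset.range N, ((n : ℝ) + 1 / 2) ^ γ := by
  have hh : 0 < b / N := div_pos hb (by exact_mod_cast hN)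
  rw [midpointSum, sub_zero, rpow_add_one hh.ne', Finset.mul_sum, Finset.mul_sum]
  refine Finset.sum_congr rfl fun n _ => ?_
  rw [zero_add, mul_rpow (by positivity) hh.le]
  ring

end

section

variable {a b γ : ℝ}

theorem exists_abs_midpointSum_lt (ha : 0 ≤ a) (hab : a < b) (h : 0 < a ∨ 0 ≤ γ) :
    ∃ K, 0 < K ∧ ∀ N : ℕ, 1 ≤ N → |midpointSum a b γ N| < K := by
  refine ⟨|(b - a) * max (a ^ γ) (b ^ γ)| + 1, by positivity, fun N hN => ?_⟩
  rw [abs_of_nonneg (midpointSum_nonneg ha hab.le)]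
  have := midpointSum_le_of_forall_rpow_le hab.le hN fun x hx => rpow_le_max_of_mem_Icc ha h hx
  linarith [le_abs_self ((b - a) * max (a ^ γ) (b ^ γ))]

theorem exists_abs_midpointSum_zero_left_lt (hb : 0 < b) (hγ : -1 < γ) :
    ∃ K, 0 < K ∧ ∀ N : ℕ, 1 ≤ N → |midpointSum 0 b γ N| < K := by
  rcases le_or_gt 0 γ with hγ₀ | hγ₀
  · exact exists_abs_midpointSum_lt le_rfl hb (Or.inr hγ₀)
  have hγ₁ : 0 < γ + 1 := by linarith
  refine ⟨b ^ (γ + 1) * ((1 / 2) ^ γ + 1 / (γ + 1)) + 1, by positivity, fun N hN => ?_⟩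
  have hN₀ : (0 : ℝ) < N := by exact_mod_cast hN
  have hh : 0 < b / N := div_pos hb hN₀
  have hhb : b / N ≤ b := div_le_self hb.le (by exact_mod_cast hN)
  rw [abs_of_nonneg (midpointSum_nonneg le_rfl hb.le), midpointSum_zero_left hb hN]
  calc (b / N) ^ (γ + 1) * ∑ n ∈ Finset.range N, ((n : ℝ) + 1 / 2) ^ γ
      ≤ (b / N) ^ (γ + 1) * ((1 / 2) ^ γ + (N : ℝ) ^ (γ + 1) / (γ + 1)) :=
        mul_le_mul_of_nonneg_left (sum_range_add_half_rpow_le_of_neg_one_lt hγ hγ₀.le hN)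
          (by positivity)
    _ = (b / N) ^ (γ + 1) * (1 / 2) ^ γ + b ^ (γ + 1) / (γ + 1) := by
        rw [mul_add, mul_div_assoc', ← mul_rpow hh.le hN₀.le, div_mul_cancel₀ _ hN₀.ne']
    _ ≤ b ^ (γ + 1) * (1 / 2) ^ γ + b ^ (γ + 1) / (γ + 1) := by gcongr
    _ < b ^ (γ + 1) * ((1 / 2) ^ γ + 1 / (γ + 1)) + 1 := by rw [mul_add, mul_one_div]; linarith

theorem exists_abs_midpointSum_zero_left_lt_mul_rpow (hb : 0 < b) (hγ : γ < -1) :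
    ∃ K, 0 < K ∧ ∀ N : ℕ, 1 ≤ N → |midpointSum 0 b γ N| < K * (b / N) ^ (γ + 1) := by
  set C := (1 / 2 : ℝ) ^ γ - (1 / 2) ^ (γ + 1) / (γ + 1)
  refine ⟨|C| + 1, by positivity, fun N hN => ?_⟩
  have hh : 0 < b / N := div_pos hb (by exact_mod_cast hN)
  rw [abs_of_nonneg (midpointSum_nonneg le_rfl hb.le), midpointSum_zero_left hb hN,
    mul_comm _ (_ ^ _)]
  gcongr
  exact (sum_range_add_half_rpow_le_of_lt_neg_one hγ hN).trans_lt (by linarith [le_abs_self C])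

theorem exists_abs_midpointSum_zero_left_inv_lt_sub_log (hb : 0 < b) :
    ∃ K, 0 < K ∧ ∀ N : ℕ, 1 ≤ N → |midpointSum 0 b (-1) N| < K - log (b / N / 2) := by
  refine ⟨|2 + log b| + 1, by positivity, fun N hN => ?_⟩
  have hN₀ : (0 : ℝ) < N := by exact_mod_cast hN
  rw [abs_of_nonneg (midpointSum_nonneg le_rfl hb.le), midpointSum_zero_left hb hN, neg_add_cancel,
    rpow_zero, one_mul, div_div, log_div hb.ne' (by positivity), mul_comm (N : ℝ)]
  linarith [sum_range_add_half_inv_le hN, le_abs_self (2 + log b)]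

end

theorem stmt13 (a b γ : ℝ) (ha : 0 ≤ a) (hab : a < b) :
    ∃ K : ℝ, 0 < K ∧ ∀ N : ℕ, 1 ≤ N →
      ((a = 0 ∧ γ < -1 →
          |((b - a) / N) * ∑ n ∈ Finset.range N,
              (a + ((n : ℝ) + 1 / 2) * ((b - a) / N)) ^ γ| <
            K * ((b - a) / N) ^ (γ + 1)) ∧
        (a = 0 ∧ γ = -1 →
          |((b - a) / N) * ∑ n ∈ Finset.range N,
              (a + ((n : ℝ) + 1 / 2) * ((b - a) / N)) ^ γ| <
            K - Real.log ((b - a) / N / 2)) ∧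
        (0 < a ∨ (a = 0 ∧ -1 < γ) →
          |((b - a) / N) * ∑ n ∈ Finset.range N,
              (a + ((n : ℝ) + 1 / 2) * ((b - a) / N)) ^ γ| < K)) := by
  rcases ha.eq_or_lt with rfl | ha
  · rcases lt_trichotomy γ (-1) with hγ | rfl | hγ
    · obtain ⟨K, hK, hS⟩ := exists_abs_midpointSum_zero_left_lt_mul_rpow hab hγ
      refine ⟨K, hK, fun N hN => ⟨fun _ => by simpa [midpointSum] using hS N hN, ?_, ?_⟩⟩
      · exact fun h => by linarith [h.2]
      · rintro (h | ⟨-, h⟩) <;> linarith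
    · obtain ⟨K, hK, hS⟩ := exists_abs_midpointSum_zero_left_inv_lt_sub_log hab
      refine ⟨K, hK, fun N hN => ⟨fun h => by linarith [h.2],
        fun _ => by simpa [midpointSum] using hS N hN, ?_⟩⟩
      rintro (h | ⟨-, h⟩) <;> linarith
    · obtain ⟨K, hK, hS⟩ := exists_abs_midpointSum_zero_left_lt hab hγ
      exact ⟨K, hK, fun N hN =>
        ⟨fun h => by linarith [h.2], fun h => by linarith [h.2], fun _ => hS N hN⟩⟩
  · obtain ⟨K, hK, hS⟩ := exists_abs_midpointSum_lt ha.le hab (Or.inl ha)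
    exact ⟨K, hK, fun N hN =>
      ⟨fun h => absurd h.1 ha.ne', fun h => absurd h.1 ha.ne', fun _ => hS N hN⟩⟩
end

section
/- Let γ ∈ ℝ with γ ≠ −1 and let θ ∈ (0,1). Then there exists K > 0 (depending only on γ and θ) such that for all h > 0, all x_n ∈ ℝ and all y ∈ ℝ with (h/2)/|x_{n+1/2} − y| ≤ θ (where x_{n+1} = x_n + h and x_{n+1/2} = x_n + h/2; in particular y ∉ [x_n, x_{n+1}]), one has |(sgn(x_{n+1}−y)·|x_{n+1}−y|^{γ+1} − sgn(x_n−y)·|x_n−y|^{γ+1})/(γ+1) − h·|x_{n+1/2}−y|^{γ}| ≤ K · h³ · |x_{n+1/2}−y|^{γ−2}. -/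
open Set

/-!
With `m = x_{n+1/2} - y`, the quantity is the midpoint-rule error for `∫ |t|^γ` over
`[m - h/2, m + h/2]`, which avoids `0`: there `t ↦ sgn t |t|^(γ+1) / (γ+1)` is an antiderivative
of `|t|^γ`, and since it is odd its increment only depends on `|m|`, so one may take `m > 0`.
Three applications of the mean value theorem bound the midpoint error by `M h³ / 4`, where
`M` bounds `|γ (γ - 1) t^(γ-2)|` on the cell; as the cell lies in `[(1-θ) m, (1+θ) m]`,
`M = |γ (γ - 1)| max ((1-θ)^(γ-2), (1+θ)^(γ-2)) m^(γ-2)` will do.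
-/

lemma abs_sub_le_of_forall_abs_deriv_le {φ φ' : ℝ → ℝ} {s : Set ℝ} {C x y : ℝ} (hs : Convex ℝ s)
    (hφ : ∀ t ∈ s, HasDerivAt φ (φ' t) t) (hC : ∀ t ∈ s, |φ' t| ≤ C) (hx : x ∈ s) (hy : y ∈ s) :
    |φ y - φ x| ≤ C * |y - x| :=
  hs.norm_image_sub_le_of_norm_hasDerivWithin_le (fun t ht => (hφ t ht).hasDerivWithinAt) hC hx hy

theorem abs_midpoint_error_le {F f f' f'' : ℝ → ℝ} {m r M : ℝ} (hr : 0 ≤ r)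
    (hF : ∀ t ∈ Icc (m - r) (m + r), HasDerivAt F (f t) t)
    (hf : ∀ t ∈ Icc (m - r) (m + r), HasDerivAt f (f' t) t)
    (hf' : ∀ t ∈ Icc (m - r) (m + r), HasDerivAt f' (f'' t) t)
    (hM : ∀ t ∈ Icc (m - r) (m + r), |f'' t| ≤ M) :
    |F (m + r) - F (m - r) - 2 * r * f m| ≤ 2 * M * r ^ 3 := by
  set s := Icc (m - r) (m + r)
  have hs : Convex ℝ s := convex_Icc _ _
  have hms : m ∈ s := ⟨by linarith, by linarith⟩
  have hM0 : 0 ≤ M := (abs_nonneg _).trans (hM m hms)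
  have hdist : ∀ t ∈ s, |t - m| ≤ r := fun t ht =>
    abs_sub_le_iff.2 ⟨by linarith [ht.2], by linarith [ht.1]⟩
  have hf'_lip : ∀ t ∈ s, |f' t - f' m| ≤ M * r := fun t ht =>
    (abs_sub_le_of_forall_abs_deriv_le hs hf' hM hms ht).trans
      (mul_le_mul_of_nonneg_left (hdist t ht) hM0)
  have hf_taylor : ∀ t ∈ s, |f t - f m - (t - m) * f' m| ≤ M * r * r := by
    intro t ht
    have hd : ∀ u ∈ s, HasDerivAt (fun v => f v - (v - m) * f' m) (f' u - f' m) u := fun u hu =>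
      ((hf u hu).sub (((hasDerivAt_id' u).sub_const m).mul_const (f' m))).congr_deriv (by ring)
    calc |f t - f m - (t - m) * f' m|
        = |(f t - (t - m) * f' m) - (f m - (m - m) * f' m)| := by ring_nf
      _ ≤ M * r * |t - m| := abs_sub_le_of_forall_abs_deriv_le hs hd hf'_lip hms ht
      _ ≤ M * r * r := mul_le_mul_of_nonneg_left (hdist t ht) (by positivity)
  have hd : ∀ u ∈ s, HasDerivAt (fun v => F v - (v - m) * f m - (v - m) ^ 2 / 2 * f' m)
      (f u - f m - (u - m) * f' m) u := fun u hu =>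
    (((hF u hu).sub (((hasDerivAt_id' u).sub_const m).mul_const (f m))).sub
      ((((hasDerivAt_id' u).sub_const m).pow 2).div_const 2 |>.mul_const (f' m))).congr_deriv
      (by ring)
  calc |F (m + r) - F (m - r) - 2 * r * f m|
      = |(F (m + r) - (m + r - m) * f m - (m + r - m) ^ 2 / 2 * f' m)
          - (F (m - r) - (m - r - m) * f m - (m - r - m) ^ 2 / 2 * f' m)| := by ring_nf
    _ ≤ M * r * r * |m + r - (m - r)| :=
        abs_sub_le_of_forall_abs_deriv_le hs hd hf_taylor ⟨by linarith, by linarith⟩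
          ⟨by linarith, by linarith⟩
    _ = 2 * M * r ^ 3 := by
        rw [show m + r - (m - r) = 2 * r by ring, abs_of_nonneg (by positivity)]; ring

lemma rpow_le_max_mul_rpow {a b m t : ℝ} (p : ℝ) (ha : 0 < a) (hm : 0 < m)
    (ht : t ∈ Icc (a * m) (b * m)) : t ^ p ≤ max (a ^ p) (b ^ p) * m ^ p := by
  have hq : t / m ∈ Icc a b := ⟨(le_div_iff₀ hm).2 ht.1, (div_le_iff₀ hm).2 ht.2⟩
  calc t ^ p = (t / m) ^ p * m ^ p := by
        rw [← Real.mul_rpow (ha.le.trans hq.1) hm.le, div_mul_cancel₀ _ hm.ne']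
    _ ≤ max (a ^ p) (b ^ p) * m ^ p := by
        gcongr
        rcases le_total 0 p with hp | hp
        · exact (Real.rpow_le_rpow (ha.le.trans hq.1) hq.2 hp).trans (le_max_right _ _)
        · exact (Real.rpow_le_rpow_of_nonpos ha hq.1 hp).trans (le_max_left _ _)

theorem abs_rpow_midpoint_error_le {γ θ m h : ℝ} (hγ : γ ≠ -1) (hθ : θ < 1) (hm : 0 < m)
    (hh : 0 ≤ h) (hhm : h / 2 ≤ θ * m) :
    |((m + h / 2) ^ (γ + 1) - (m - h / 2) ^ (γ + 1)) / (γ + 1) - h * m ^ γ| ≤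
      |γ * (γ - 1)| * max ((1 - θ) ^ (γ - 2)) ((1 + θ) ^ (γ - 2)) / 4 * h ^ 3 * m ^ (γ - 2) := by
  have hγ1 : γ + 1 ≠ 0 := fun hc => hγ (by linarith)
  set s := Icc (m - h / 2) (m + h / 2)
  have hpos : ∀ t ∈ s, 0 < t := fun t ht => by nlinarith [ht.1]
  have hF : ∀ t ∈ s, HasDerivAt (fun u => u ^ (γ + 1) / (γ + 1)) (t ^ γ) t := fun t ht =>
    ((Real.hasDerivAt_rpow_const (Or.inl (hpos t ht).ne')).div_const _).congr_deriv
      (by rw [add_sub_cancel_right]; field_simp)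
  have hf : ∀ t ∈ s, HasDerivAt (fun u => u ^ γ) (γ * t ^ (γ - 1)) t := fun t ht =>
    Real.hasDerivAt_rpow_const (Or.inl (hpos t ht).ne')
  have hf' : ∀ t ∈ s, HasDerivAt (fun u => γ * u ^ (γ - 1)) (γ * (γ - 1) * t ^ (γ - 2)) t :=
    fun t ht => ((Real.hasDerivAt_rpow_const (Or.inl (hpos t ht).ne')).const_mul γ).congr_deriv
      (by rw [sub_sub, one_add_one_eq_two, mul_assoc])
  have hM : ∀ t ∈ s, |γ * (γ - 1) * t ^ (γ - 2)| ≤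
      |γ * (γ - 1)| * (max ((1 - θ) ^ (γ - 2)) ((1 + θ) ^ (γ - 2)) * m ^ (γ - 2)) := by
    intro t ht
    rw [abs_mul, abs_of_pos (Real.rpow_pos_of_pos (hpos t ht) _)]
    gcongr
    exact rpow_le_max_mul_rpow _ (by linarith) hm ⟨by nlinarith [ht.1], by nlinarith [ht.2]⟩
  have := abs_midpoint_error_le (by positivity) hF hf hf' hM
  rw [← sub_div, mul_div_cancel₀ _ two_ne_zero] at this
  exact this.trans_eq (by ring)

lemma sign_mul_abs_rpow_add_sub_sign_mul_abs_rpow_sub {m r : ℝ} (p : ℝ) (hr : |r| < |m|) :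
    Real.sign (m + r) * |m + r| ^ p - Real.sign (m - r) * |m - r| ^ p =
      (|m| + r) ^ p - (|m| - r) ^ p := by
  obtain ⟨hr₁, hr₂⟩ := abs_lt.1 hr
  rcases lt_or_gt_of_ne (abs_pos.1 ((abs_nonneg r).trans_lt hr)) with hm | hm
  · rw [abs_of_neg hm] at hr₁ hr₂ ⊢
    rw [Real.sign_of_neg (by linarith), Real.sign_of_neg (by linarith), abs_of_neg (by linarith),
      abs_of_neg (by linarith), neg_add', neg_sub', sub_neg_eq_add]
    ring
  · rw [abs_of_pos hm] at hr₁ hr₂ ⊢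
    rw [Real.sign_of_pos (by linarith), Real.sign_of_pos (by linarith), abs_of_pos (by linarith),
      abs_of_pos (by linarith)]
    ring

theorem stmt14 (γ θ : ℝ) (hγ : γ ≠ -1) (hθ : θ ∈ Set.Ioo (0 : ℝ) 1) :
    ∃ K : ℝ, 0 < K ∧ ∀ h xn y : ℝ, 0 < h → h / 2 ≤ θ * |xn + h / 2 - y| →
      |(Real.sign (xn + h - y) * |xn + h - y| ^ (γ + 1) -
            Real.sign (xn - y) * |xn - y| ^ (γ + 1)) / (γ + 1) -
          h * |xn + h / 2 - y| ^ γ| ≤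
        K * h ^ 3 * |xn + h / 2 - y| ^ (γ - 2) := by
  obtain ⟨hθ₀, hθ₁⟩ := hθ
  refine ⟨max (|γ * (γ - 1)| * max ((1 - θ) ^ (γ - 2)) ((1 + θ) ^ (γ - 2)) / 4) 1,
    lt_max_of_lt_right one_pos, fun h xn y hh hcond => ?_⟩
  set m := xn + h / 2 - y
  have hm : 0 < |m| := pos_of_mul_pos_right (by linarith) hθ₀.le
  have hhm : |h / 2| < |m| := by rw [abs_of_pos (half_pos hh)]; nlinarith
  rw [show xn + h - y = m + h / 2 by ring, show xn - y = m - h / 2 by ring,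
    sign_mul_abs_rpow_add_sub_sign_mul_abs_rpow_sub _ hhm]
  refine (abs_rpow_midpoint_error_le hγ hθ₁ hm hh.le hcond).trans ?_
  gcongr
  exact le_max_left _ _
end
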